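/- For every fixed radius R > 0 and dimension n ≥ 2, the function s ↦ V^n_s(R) is strictly decreasing on ℝ. -/

import Mathlib

/-- Volume of the Euclidean unit `n`-ball: `b_n = π^(n/2) / Γ(n/2 + 1)`. -/
noncomputable def eucBallVol (n : ℕ) : ℝ :=
  Real.pi ^ ((n : ℝ) / 2) / Real.Gamma ((n : ℝ) / 2 + 1)

/-- Volume of the unit `n`-sphere: `w_n = (n+1) b_{n+1}`. -/
noncomputable def sphVol (n : ℕ) : ℝ := ((n : ℝ) + 1) * eucBallVol (n + 1)

/-- `V^n_s(R)`: the volume of a metric ball of radius `R` in the simply connected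
`n`-dimensional space form of constant scalar curvature `s`
(sectional curvature `σ = s/(n(n-1))`, radius `ρ = 1/√|σ|`). -/
noncomputable def spaceFormVol (n : ℕ) (s R : ℝ) : ℝ :=
  if 0 < s then
    (if R < Real.pi * Real.sqrt ((n : ℝ) * ((n : ℝ) - 1) / s) then
      sphVol (n - 1) *
        ∫ t in (0 : ℝ)..R,
          (Real.sin (Real.sqrt (s / ((n : ℝ) * ((n : ℝ) - 1))) * t) /
            Real.sqrt (s / ((n : ℝ) * ((n : ℝ) - 1)))) ^ (n - 1)
    else sphVol n * Real.sqrt ((n : ℝ) * ((n : ℝ) - 1) / s) ^ n)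
  else if s = 0 then eucBallVol n * R ^ n
  else
    sphVol (n - 1) *
      ∫ t in (0 : ℝ)..R,
        (Real.sinh (Real.sqrt (-s / ((n : ℝ) * ((n : ℝ) - 1))) * t) /
          Real.sqrt (-s / ((n : ℝ) * ((n : ℝ) - 1)))) ^ (n - 1)

/-!
Write `κ = s / (n (n - 1))` for the sectional curvature. In every case
`V^n_s(R) = w_{n-1} ∫₀^T sn_κ(t)^{n-1} dt` with `T = min R (π / √κ)` for `κ > 0` and `T = R`
otherwise; for `R ≥ π / √κ` this is the recursion `w_n = w_{n-1} ∫₀^π sin^{n-1}`.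
Increasing `κ` shrinks `T` and, for `0 < t ≤ T`, strictly decreases `sn_κ(t) ≥ 0`: this is
`sin x < x < sinh x` together with the monotonicity of the secant slopes `sin x / x` (sin is
concave on `[0, π]`) and `sinh x / x` (sinh is convex on `[0, ∞)`).
-/

open Real Set MeasureTheory

theorem sin_div_lt_sin_div {x y : ℝ} (hx : 0 < x) (hxy : x < y) (hy : y ≤ π) :
    sin y / y < sin x / x := by
  have := strictConcaveOn_sin_Icc.secant_strict_mono (a := 0) ⟨le_rfl, pi_pos.le⟩
    ⟨hx.le, hxy.le.trans hy⟩ ⟨(hx.trans hxy).le, hy⟩ hx.ne' (hx.trans hxy).ne' hxy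
  simpa using this

theorem strictConvexOn_sinh_Ici : StrictConvexOn ℝ (Ici 0) sinh := by
  refine StrictMonoOn.strictConvexOn_of_deriv (convex_Ici 0) continuous_sinh.continuousOn ?_
  rw [Real.deriv_sinh, interior_Ici]
  exact cosh_strictMonoOn.mono Ioi_subset_Ici_self

theorem sinh_div_lt_sinh_div {x y : ℝ} (hx : 0 < x) (hxy : x < y) :
    sinh x / x < sinh y / y := by
  have := strictConvexOn_sinh_Ici.secant_strict_mono (a := 0) self_mem_Ici hx.le
    (hx.trans hxy).le hx.ne' (hx.trans hxy).ne' hxy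
  simpa using this

/-- The warping function of the space form of curvature `κ`: the solution of `f'' + κ f = 0`,
`f 0 = 0`, `f' 0 = 1`. -/
noncomputable def sn (κ t : ℝ) : ℝ :=
  if 0 < κ then sin (√κ * t) / √κ
  else if κ = 0 then t
  else sinh (√(-κ) * t) / √(-κ)

section sn

variable {κ κ₁ κ₂ t : ℝ}

theorem sn_of_pos (hκ : 0 < κ) (t : ℝ) : sn κ t = sin (√κ * t) / √κ := if_pos hκ

@[simp] theorem sn_zero_left (t : ℝ) : sn 0 t = t := by simp [sn]

theorem sn_of_neg (hκ : κ < 0) (t : ℝ) : sn κ t = sinh (√(-κ) * t) / √(-κ) := by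
  simp [sn, hκ.not_gt, hκ.ne]

theorem continuous_sn (κ : ℝ) : Continuous (sn κ) := by
  unfold sn
  split_ifs <;> fun_prop

theorem sn_nonneg (ht : 0 ≤ t) (hκt : √κ * t ≤ π) : 0 ≤ sn κ t := by
  rcases lt_trichotomy κ 0 with hκ | rfl | hκ
  · rw [sn_of_neg hκ]
    exact div_nonneg (sinh_nonneg_iff.2 (by positivity)) (sqrt_nonneg _)
  · simpa using ht
  · rw [sn_of_pos hκ]
    exact div_nonneg (sin_nonneg_of_nonneg_of_le_pi (by positivity) hκt) (sqrt_nonneg _)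

theorem sn_lt_self (hκ : 0 < κ) (ht : 0 < t) : sn κ t < t := by
  rw [sn_of_pos hκ, div_lt_iff₀ (sqrt_pos.2 hκ), mul_comm t]
  exact sin_lt (by positivity)

theorem self_lt_sn (hκ : κ < 0) (ht : 0 < t) : t < sn κ t := by
  have hκ' : 0 < -κ := neg_pos.2 hκ
  rw [sn_of_neg hκ, lt_div_iff₀ (sqrt_pos.2 hκ'), mul_comm t]
  exact self_lt_sinh_iff.2 (by positivity)

theorem sn_lt_sn_of_pos (hκ₁ : 0 < κ₁) (h : κ₁ < κ₂) (ht : 0 < t) (hκt : √κ₂ * t ≤ π) :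
    sn κ₂ t < sn κ₁ t := by
  have hsqrt : √κ₁ * t < √κ₂ * t := by gcongr
  have := sin_div_lt_sin_div (by positivity) hsqrt hκt
  rw [sn_of_pos hκ₁, sn_of_pos (hκ₁.trans h)]
  calc sin (√κ₂ * t) / √κ₂ = sin (√κ₂ * t) / (√κ₂ * t) * t := by field_simp
    _ < sin (√κ₁ * t) / (√κ₁ * t) * t := by gcongr
    _ = sin (√κ₁ * t) / √κ₁ := by field_simp

theorem sn_lt_sn_of_neg (h : κ₁ < κ₂) (hκ₂ : κ₂ < 0) (ht : 0 < t) : sn κ₂ t < sn κ₁ t := by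
  have hsqrt : √(-κ₂) * t < √(-κ₁) * t := by gcongr; linarith
  have := sinh_div_lt_sinh_div (mul_pos (sqrt_pos.2 (neg_pos.2 hκ₂)) ht) hsqrt
  rw [sn_of_neg hκ₂, sn_of_neg (h.trans hκ₂)]
  calc sinh (√(-κ₂) * t) / √(-κ₂) = sinh (√(-κ₂) * t) / (√(-κ₂) * t) * t := by field_simp
    _ < sinh (√(-κ₁) * t) / (√(-κ₁) * t) * t := by gcongr
    _ = sinh (√(-κ₁) * t) / √(-κ₁) := by field_simp

-- For `κ₂ ≤ 0` the hypothesis `√κ₂ * t ≤ π` holds trivially, as then `√κ₂ = 0`.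
theorem sn_lt_sn (h : κ₁ < κ₂) (ht : 0 < t) (hκt : √κ₂ * t ≤ π) : sn κ₂ t < sn κ₁ t := by
  rcases lt_trichotomy κ₂ 0 with hκ₂ | rfl | hκ₂
  · exact sn_lt_sn_of_neg h hκ₂ ht
  · simpa using self_lt_sn h ht
  rcases lt_trichotomy κ₁ 0 with hκ₁ | rfl | hκ₁
  · exact (sn_lt_self hκ₂ ht).trans (self_lt_sn hκ₁ ht)
  · simpa using sn_lt_self hκ₂ ht
  · exact sn_lt_sn_of_pos hκ₁ h ht hκt

end sn

/-- In the sphere of curvature `κ > 0` every ball of radius at least `π / √κ` is the whole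
sphere. -/
noncomputable def truncRadius (κ R : ℝ) : ℝ :=
  if 0 < κ then min R (π / √κ) else R

section truncRadius

variable {κ κ₁ κ₂ R t : ℝ}

theorem truncRadius_pos (hR : 0 < R) : 0 < truncRadius κ R := by
  unfold truncRadius
  split_ifs with hκ
  · exact lt_min hR (by positivity)
  · exact hR

theorem sqrt_mul_le_pi_of_le_truncRadius (ht : t ≤ truncRadius κ R) : √κ * t ≤ π := by
  unfold truncRadius at ht
  split_ifs at ht with hκ
  · rw [← le_div_iff₀' (sqrt_pos.2 hκ)]
    exact ht.trans (min_le_right _ _)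
  · simp [sqrt_eq_zero'.2 (not_lt.1 hκ), pi_pos.le]

theorem truncRadius_antitone (R : ℝ) : Antitone (truncRadius · R) := by
  intro κ₁ κ₂ h
  simp only [truncRadius]
  split_ifs with h₂ h₁ h₁
  · gcongr
  · exact min_le_left _ _
  · exact absurd (h₁.trans_le h) h₂
  · exact le_rfl

end truncRadius

theorem integral_sn_pow_strictAnti {m : ℕ} (hm : m ≠ 0) {R : ℝ} (hR : 0 < R) :
    StrictAnti fun κ => ∫ t in (0 : ℝ)..truncRadius κ R, sn κ t ^ m := by
  intro κ₁ κ₂ h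
  set T₁ := truncRadius κ₁ R
  set T₂ := truncRadius κ₂ R
  have hT₂ : 0 < T₂ := truncRadius_pos hR
  have hT : T₂ ≤ T₁ := truncRadius_antitone R h.le
  have hcont : ∀ κ, Continuous fun t => sn κ t ^ m := fun κ => (continuous_sn κ).pow m
  have hlt : ∀ t ∈ Ioc 0 T₂, sn κ₂ t ^ m < sn κ₁ t ^ m := fun t ht => by
    have hκt := sqrt_mul_le_pi_of_le_truncRadius ht.2
    exact pow_lt_pow_left₀ (sn_lt_sn h ht.1 hκt) (sn_nonneg ht.1.le hκt) hm
  calc ∫ t in (0 : ℝ)..T₂, sn κ₂ t ^ m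
      < ∫ t in (0 : ℝ)..T₂, sn κ₁ t ^ m :=
        intervalIntegral.integral_lt_integral_of_continuousOn_of_le_of_exists_lt hT₂
          (hcont κ₂).continuousOn (hcont κ₁).continuousOn
          (fun t ht => (hlt t ht).le) ⟨T₂, ⟨hT₂.le, le_rfl⟩, hlt T₂ ⟨hT₂, le_rfl⟩⟩
    _ ≤ ∫ t in (0 : ℝ)..T₁, sn κ₁ t ^ m := by
        refine intervalIntegral.integral_mono_interval le_rfl hT₂.le hT ?_
          ((hcont κ₁).intervalIntegrable _ _)
        refine (ae_restrict_iff' measurableSet_Ioc).2 (.of_forall fun t ht => ?_)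
        exact pow_nonneg (sn_nonneg ht.1.le (sqrt_mul_le_pi_of_le_truncRadius ht.2)) m

theorem eucBallVol_pos (n : ℕ) : 0 < eucBallVol n :=
  div_pos (rpow_pos_of_pos pi_pos _) (Gamma_pos_of_pos (by positivity))

theorem sphVol_pos (n : ℕ) : 0 < sphVol n :=
  mul_pos (by positivity) (eucBallVol_pos _)

theorem sphVol_zero : sphVol 0 = 2 := by
  have hΓ : Gamma (2⁻¹ + 1) = √π / 2 := by
    rw [Gamma_add_one (by norm_num), ← one_div, Gamma_one_half_eq]; ring
  have hπ : π ^ (2⁻¹ : ℝ) = √π := by rw [sqrt_eq_rpow, one_div]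
  have : √π ≠ 0 := (sqrt_pos.2 pi_pos).ne'
  simp [sphVol, eucBallVol, hΓ, hπ]
  field_simp

theorem sphVol_one : sphVol 1 = 2 * π := by
  norm_num [sphVol, eucBallVol]

theorem sphVol_add_two (k : ℕ) : sphVol (k + 2) = 2 * π / (k + 1) * sphVol k := by
  have hΓ : Gamma (((k : ℝ) + 3) / 2 + 1) = ((k + 3) / 2) * Gamma (((k : ℝ) + 1) / 2 + 1) := by
    rw [show ((k : ℝ) + 3) / 2 + 1 = ((k + 1) / 2 + 1) + 1 by ring,
      Gamma_add_one (by positivity)]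
    ring
  have hπ : π ^ (((k : ℝ) + 3) / 2) = π * π ^ (((k : ℝ) + 1) / 2) := by
    rw [← rpow_one_add' pi_pos.le (by positivity)]; ring_nf
  simp only [sphVol, eucBallVol]
  push_cast
  rw [show (k : ℝ) + 2 + 1 = k + 3 by ring, hΓ, hπ]
  have := Gamma_pos_of_pos (show (0 : ℝ) < (k + 1) / 2 + 1 by positivity)
  field_simp

theorem integral_sin_pow_add_two (m : ℕ) :
    ∫ x in (0 : ℝ)..π, sin x ^ (m + 2) = (m + 1) / (m + 2) * ∫ x in (0 : ℝ)..π, sin x ^ m := by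
  simp [integral_sin_pow]

theorem sphVol_succ (m : ℕ) : sphVol (m + 1) = sphVol m * ∫ x in (0 : ℝ)..π, sin x ^ m := by
  induction m using Nat.twoStepInduction with
  | zero => simp [sphVol_zero, sphVol_one, mul_comm]
  | one => norm_num [sphVol_add_two 0, sphVol_one, sphVol_zero]
  | more m ih _ =>
    rw [sphVol_add_two, integral_sin_pow_add_two, sphVol_add_two, ih]
    push_cast
    field_simp
    ring

theorem integral_sn_pow_of_pos {κ : ℝ} (hκ : 0 < κ) (m : ℕ) :
    ∫ t in (0 : ℝ)..π / √κ, sn κ t ^ m = (√κ)⁻¹ ^ (m + 1) * ∫ x in (0 : ℝ)..π, sin x ^ m := by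
  have hsqrt : √κ ≠ 0 := (sqrt_pos.2 hκ).ne'
  simp only [sn_of_pos hκ, div_pow]
  rw [intervalIntegral.integral_div,
    intervalIntegral.integral_comp_mul_left (fun x => sin x ^ m) hsqrt, mul_zero, mul_div_cancel₀ π hsqrt, smul_eq_mul, pow_succ, inv_pow]
  ring

theorem spaceFormVol_eq {n : ℕ} (hn : 2 ≤ n) (s R : ℝ) :
    spaceFormVol n s R = sphVol (n - 1) *
      ∫ t in (0 : ℝ)..truncRadius (s / (n * (n - 1))) R, sn (s / (n * (n - 1))) t ^ (n - 1) := by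
  obtain ⟨m, rfl⟩ : ∃ m, n = m + 1 := ⟨n - 1, by omega⟩
  have hm : (1 : ℝ) ≤ m := by exact_mod_cast (by omega : 1 ≤ m)
  have hc : (0 : ℝ) < (m + 1 : ℕ) * ((m + 1 : ℕ) - 1) := by push_cast; nlinarith
  unfold spaceFormVol truncRadius
  set c : ℝ := (m + 1 : ℕ) * ((m + 1 : ℕ) - 1)
  simp only [Nat.add_sub_cancel]
  rcases lt_trichotomy s 0 with hs | rfl | hs
  · have hκ : s / c < 0 := div_neg_of_neg_of_pos hs hc
    simp [sn_of_neg hκ, hs.not_gt, hs.ne, hκ.not_gt, neg_div]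
  · simp [integral_pow, sphVol]
    field_simp
  · have hκ : 0 < s / c := div_pos hs hc
    have hρ : √(c / s) = (√(s / c))⁻¹ := by rw [← sqrt_inv, inv_div]
    simp only [if_pos hs, if_pos hκ, hρ, ← div_eq_mul_inv]
    split_ifs with hR
    · simp [min_eq_left hR.le, sn_of_pos hκ]
    · rw [min_eq_right (not_lt.1 hR), integral_sn_pow_of_pos hκ, sphVol_succ]
      ring

/-- for every fixed radius `R > 0` and dimension `n ≥ 2`,
the function `s ↦ V^n_s(R)` is strictly decreasing on `ℝ`. -/
theorem spaceFormVol_strictAnti (n : ℕ) (hn : 2 ≤ n) (R : ℝ) (hR : 0 < R) :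
    StrictAnti (fun s : ℝ => spaceFormVol n s R) := by
  have hc : (0 : ℝ) < n * (n - 1) := by
    have : (2 : ℝ) ≤ n := by exact_mod_cast hn
    nlinarith
  intro s₁ s₂ hs
  simp only [spaceFormVol_eq hn]
  exact mul_lt_mul_of_pos_left
    (integral_sn_pow_strictAnti (by omega) hR (div_lt_div_of_pos_right hs hc)) (sphVol_pos _)
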